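/- arXiv:2505.16357 — 2 statements merged into one kernel-verified Lean document; each statement's English description precedes it below -/
import Mathlib

section
/- Consider the MDP with states {s₁, s₂, t, ⊥}, where s₂ has a single enabled action τ with P(s₂,τ,s₁)=1, s₁ has two enabled actions α and β with P(s₁,α,t)=1 and P(s₁,β,t)=P(s₁,β,⊥)=1/2, and t and ⊥ are absorbing. Then: (i) every memoryless deterministic scheduler σ satisfies Pr^σ_{s₁}(◇{t}) = Pr^σ_{s₂}(◇{t}); and (ii) there exists a (memoryful) scheduler σ with Pr^σ_{s₂}(◇{t}) < Pr^σ_{s₁}(◇{t}). In particular, the property ∃σ. Pr^σ_{s₂}(◇{t}) < Pr^σ_{s₁}(◇{t}) (and likewise ∃σ. Pr^σ_{s₁}(◇{t}) ≠ Pr^σ_{s₂}(◇{t})) is satisfiable over general schedulers but not over memoryless deterministic schedulers. -/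
open scoped BigOperators Classical
open Filter

/-- A finite history: an initial state together with a list of (action, next-state) steps. -/
abbrev Hist (S A : Type*) : Type _ := S × List (A × S)

/-- The last state of a history. -/
def Hist.last {S A : Type*} (π : Hist S A) : S :=
  (π.2.getLast?).elim π.1 Prod.snd

/-- A Markov decision process with finite state space `S` and finite action space `A`:
`P s a s'` is the transition probability, each state has at least one enabled action
(an action whose outgoing probabilities sum to `1`), and the outgoing probabilities
of a non-enabled action sum to `0`. -/
structure MDP (S A : Type*) [Fintype S] [Fintype A] where
  P : S → A → S → ℝ
  nonneg : ∀ s a s', 0 ≤ P s a s'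
  le_one : ∀ s a s', P s a s' ≤ 1
  sum_cases : ∀ s a, (∑ s', P s a s') = 1 ∨ (∑ s', P s a s') = 0
  exists_enabled : ∀ s, ∃ a, (∑ s', P s a s') = 1

namespace MDP

variable {S A : Type*} [Fintype S] [Fintype A]

/-- Action `a` is enabled in state `s`. -/
def enabled (M : MDP S A) (s : S) (a : A) : Prop := (∑ s', M.P s a s') = 1

/-- A state is absorbing if every enabled action loops on it with probability 1. -/
def Absorbing (M : MDP S A) (s : S) : Prop := ∀ a, M.enabled s a → M.P s a s = 1

end MDP

/-- A (history-dependent, randomized) scheduler for `M`: it assigns to every finite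
history a probability distribution over the actions enabled at its last state. -/
structure Scheduler {S A : Type*} [Fintype S] [Fintype A] (M : MDP S A) where
  choice : Hist S A → A → ℝ
  nonneg : ∀ π a, 0 ≤ choice π a
  sum_one : ∀ π, (∑ a, choice π a) = 1
  supp : ∀ π a, ¬ M.enabled (Hist.last π) a → choice π a = 0

namespace Scheduler

variable {S A : Type*} [Fintype S] [Fintype A] {M : MDP S A}

/-- A scheduler is memoryless if its choice only depends on the last state of the history. -/
def Memoryless (σ : Scheduler M) : Prop :=
  ∀ π π' : Hist S A, Hist.last π = Hist.last π' → σ.choice π = σ.choice π'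

/-- A scheduler is deterministic if all its choice probabilities are 0 or 1. -/
def Deterministic (σ : Scheduler M) : Prop :=
  ∀ π a, σ.choice π a = 0 ∨ σ.choice π a = 1

/-- Memoryless deterministic (MD) schedulers. -/
def MD (σ : Scheduler M) : Prop := σ.Memoryless ∧ σ.Deterministic

end Scheduler

/-- Probability of reaching the target set `T` within `n` steps, starting from history `π`,
under scheduler `σ`. -/
noncomputable def reachN {S A : Type*} [Fintype S] [Fintype A] (M : MDP S A)
    (σ : Scheduler M) (T : Set S) : ℕ → Hist S A → ℝ
  | 0, π => if Hist.last π ∈ T then 1 else 0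
  | n + 1, π =>
      if Hist.last π ∈ T then 1
      else ∑ a, σ.choice π a * ∑ s', M.P (Hist.last π) a s' *
        reachN M σ T n (π.1, π.2 ++ [(a, s')])

/-- `Pr M σ s T` is the probability of eventually reaching `T` from state `s` under
scheduler `σ`: the supremum of the step-bounded reachability probabilities. -/
noncomputable def Pr {S A : Type*} [Fintype S] [Fintype A] (M : MDP S A)
    (σ : Scheduler M) (s : S) (T : Set S) : ℝ :=
  ⨆ n : ℕ, reachN M σ T n (s, [])

/-- The concrete transition function: state `0` (= s₁) has enabled actions `0` (= α, to `t`
with probability 1) and `1` (= β, to `t` and `⊥` with probability `1/2` each); state `1`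
(= s₂) has the single enabled action `0` (= τ, to `s₁`); states `2` (= t) and `3` (= ⊥)
are absorbing. -/
noncomputable def P9 : Fin 4 → Fin 2 → Fin 4 → ℝ := fun st a st' =>
  if st = 0 then
    (if a = 0 then (if st' = 2 then 1 else 0)
     else ((if st' = 2 then (1 : ℝ) / 2 else 0) + (if st' = 3 then 1 / 2 else 0)))
  else if st = 1 then
    (if a = 0 then (if st' = 0 then 1 else 0) else 0)
  else (if st' = st then 1 else 0)

section Aux

lemma hist_last_pair {S A : Type*} (s : S) : Hist.last ((s, []) : Hist S A) = s := rfl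

lemma hist_last_concat {S A : Type*} (π : Hist S A) (a : A) (s' : S) :
    Hist.last ((π.1, π.2 ++ [(a, s')]) : Hist S A) = s' := by
  simp [Hist.last, List.getLast?_concat]

variable (M : MDP (Fin 4) (Fin 2)) (σ : Scheduler M)

lemma reach_two : ∀ n (π : Hist (Fin 4) (Fin 2)), Hist.last π = 2 →
    reachN M σ ({2} : Set (Fin 4)) n π = 1 := by
  intro n π h
  cases n <;> simp [reachN, h]

lemma reach_three (hM : M.P = P9) : ∀ n (π : Hist (Fin 4) (Fin 2)), Hist.last π = 3 →
    reachN M σ ({2} : Set (Fin 4)) n π = 0 := by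
  intro n
  induction n with
  | zero => intro π h; simp [reachN, h]
  | succ n ih =>
    intro π h
    have h32 : ((3 : Fin 4) ∈ ({2} : Set (Fin 4))) = False := by
      simp
    simp only [reachN, h, h32, if_false]
    apply Finset.sum_eq_zero
    intro a _
    have hsum : ∀ a : Fin 2, (∑ s' : Fin 4, M.P 3 a s' *
        reachN M σ ({2} : Set (Fin 4)) n (π.1, π.2 ++ [(a, s')])) = 0 := by
      intro a
      rw [Fin.sum_univ_four]
      have h3 := ih (π.1, π.2 ++ [(a, 3)]) (hist_last_concat π a 3)
      simp [hM, P9, h3]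
    rw [hsum a, mul_zero]

lemma reach_zero_succ (hM : M.P = P9) : ∀ n (π : Hist (Fin 4) (Fin 2)), Hist.last π = 0 →
    reachN M σ ({2} : Set (Fin 4)) (n + 1) π = σ.choice π 0 + σ.choice π 1 / 2 := by
  intro n π h
  have h02 : ((0 : Fin 4) ∈ ({2} : Set (Fin 4))) = False := by simp
  simp only [reachN, h, h02, if_false]
  rw [Fin.sum_univ_two]
  have e2a : reachN M σ ({2} : Set (Fin 4)) n (π.1, π.2 ++ [(0, 2)]) = 1 :=
    reach_two M σ n _ (hist_last_concat π 0 2)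
  have e2b : reachN M σ ({2} : Set (Fin 4)) n (π.1, π.2 ++ [(1, 2)]) = 1 :=
    reach_two M σ n _ (hist_last_concat π 1 2)
  have e3 : reachN M σ ({2} : Set (Fin 4)) n (π.1, π.2 ++ [(1, 3)]) = 0 :=
    reach_three M σ hM n _ (hist_last_concat π 1 3)
  rw [Fin.sum_univ_four, Fin.sum_univ_four]
  simp [hM, P9, e2a, e2b, e3]
  ring

lemma reach_one_succ (hM : M.P = P9) : ∀ n (π : Hist (Fin 4) (Fin 2)), Hist.last π = 1 →
    reachN M σ ({2} : Set (Fin 4)) (n + 1) π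
      = reachN M σ ({2} : Set (Fin 4)) n (π.1, π.2 ++ [(0, 0)]) := by
  intro n π h
  have h12 : ((1 : Fin 4) ∈ ({2} : Set (Fin 4))) = False := by simp
  have hne : ¬ M.enabled (Hist.last π) 1 := by
    rw [h]; simp [MDP.enabled, hM, P9, Fin.sum_univ_four]
  have hc1 : σ.choice π 1 = 0 := σ.supp π 1 hne
  have hc0 : σ.choice π 0 = 1 := by
    have := σ.sum_one π
    rw [Fin.sum_univ_two, hc1] at this
    linarith
  simp only [reachN, h, h12, if_false]
  rw [Fin.sum_univ_two, hc1, hc0, zero_mul, add_zero, one_mul, Fin.sum_univ_four]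
  simp [hM, P9]

lemma ciSup_eq_of_le (f : ℕ → ℝ) (v : ℝ) (N : ℕ) (hle : ∀ n, f n ≤ v) (hN : f N = v) :
    (⨆ n, f n) = v := by
  apply le_antisymm (ciSup_le hle)
  calc v = f N := hN.symm
    _ ≤ ⨆ n, f n := le_ciSup ⟨v, Set.forall_mem_range.mpr hle⟩ N

lemma Pr_zero (hM : M.P = P9) : Pr M σ 0 ({2} : Set (Fin 4))
    = σ.choice (0, []) 0 + σ.choice (0, []) 1 / 2 := by
  have hv : (0:ℝ) ≤ σ.choice (0, []) 0 + σ.choice (0, []) 1 / 2 := by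
    have := σ.nonneg (0, []) 0
    have := σ.nonneg (0, []) 1
    linarith
  apply ciSup_eq_of_le _ _ 1
  · intro n
    cases n with
    | zero => simpa [reachN, Hist.last] using hv
    | succ n => exact le_of_eq (reach_zero_succ M σ hM n _ rfl)
  · exact reach_zero_succ M σ hM 0 _ rfl

lemma Pr_one (hM : M.P = P9) : Pr M σ 1 ({2} : Set (Fin 4))
    = σ.choice (1, [(0, 0)]) 0 + σ.choice (1, [(0, 0)]) 1 / 2 := by
  have hv : (0:ℝ) ≤ σ.choice (1, [(0,0)]) 0 + σ.choice (1, [(0,0)]) 1 / 2 := by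
    have := σ.nonneg (1, [(0,0)]) 0
    have := σ.nonneg (1, [(0,0)]) 1
    linarith
  have hlast1 : Hist.last ((1, []) : Hist (Fin 4) (Fin 2)) = 1 := rfl
  have hlast0 : Hist.last ((1, [(0,0)]) : Hist (Fin 4) (Fin 2)) = 0 := rfl
  have hstep : ∀ n, reachN M σ ({2} : Set (Fin 4)) (n + 1) (1, [])
      = reachN M σ ({2} : Set (Fin 4)) n (1, [(0,0)]) :=
    fun n => reach_one_succ M σ hM n _ hlast1
  apply ciSup_eq_of_le _ _ 2
  · intro n
    cases n with
    | zero => simpa [reachN, Hist.last] using hv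
    | succ n =>
      rw [hstep n]
      cases n with
      | zero => simpa [reachN, hlast0] using hv
      | succ n => exact le_of_eq (reach_zero_succ M σ hM n _ hlast0)
  · rw [hstep 1]; exact reach_zero_succ M σ hM 0 _ hlast0

lemma enabled_act0 (hM : M.P = P9) (s : Fin 4) : M.enabled s 0 := by
  fin_cases s <;> simp [MDP.enabled, hM, P9, Fin.sum_univ_four]

lemma enabled_zero_one (hM : M.P = P9) : M.enabled 0 1 := by
  simp [MDP.enabled, hM, P9, Fin.sum_univ_four]
  norm_num

noncomputable def memSched (hM : M.P = P9) : Scheduler M where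
  choice π a := if π = ((1 : Fin 4), [((0 : Fin 2), (0 : Fin 4))]) then
      (if a = 1 then 1 else 0) else (if a = 0 then 1 else 0)
  nonneg := by intro π a; split <;> split <;> norm_num
  sum_one := by intro π; split <;> simp [Fin.sum_univ_two]
  supp := by
    intro π a h
    split
    · rename_i hπ
      split
      · rename_i ha
        exfalso; apply h
        subst hπ ha
        exact enabled_zero_one M hM
      · rfl
    · split
      · rename_i ha
        exfalso; apply h; subst ha; exact enabled_act0 M hM _
      · rfl

lemma memSched_pr0 (hM : M.P = P9) : Pr M (memSched M hM) 0 ({2} : Set (Fin 4)) = 1 := by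
  rw [Pr_zero M (memSched M hM) hM]
  have hne : ((0 : Fin 4), ([] : List (Fin 2 × Fin 4)))
      ≠ ((1 : Fin 4), [((0 : Fin 2), (0 : Fin 4))]) := by simp
  simp [memSched, hne]

lemma memSched_pr1 (hM : M.P = P9) : Pr M (memSched M hM) 1 ({2} : Set (Fin 4)) = 1 / 2 := by
  rw [Pr_one M (memSched M hM) hM]
  simp [memSched]

end Aux

/-- In the MDP with states `{s₁, s₂, t, ⊥}` as above:
(i) every memoryless deterministic scheduler reaches `t` from `s₁` and from `s₂` with the
same probability; (ii) some memoryful scheduler reaches `t` from `s₂` with strictly smaller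
probability than from `s₁`.  In particular, `∃σ. Pr^σ_{s₂}(◇{t}) < Pr^σ_{s₁}(◇{t})` and
`∃σ. Pr^σ_{s₁}(◇{t}) ≠ Pr^σ_{s₂}(◇{t})` are satisfiable over general schedulers but not
over MD schedulers. -/
theorem memory_necessary_for_strict_inequality
    (M : MDP (Fin 4) (Fin 2)) (hM : M.P = P9) :
    (∀ σ : Scheduler M, σ.MD →
        Pr M σ 0 ({2} : Set (Fin 4)) = Pr M σ 1 ({2} : Set (Fin 4))) ∧
    (∃ σ : Scheduler M,
        Pr M σ 1 ({2} : Set (Fin 4)) < Pr M σ 0 ({2} : Set (Fin 4))) ∧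
    (¬ ∃ σ : Scheduler M, σ.MD ∧
        Pr M σ 1 ({2} : Set (Fin 4)) < Pr M σ 0 ({2} : Set (Fin 4))) ∧
    (∃ σ : Scheduler M,
        Pr M σ 0 ({2} : Set (Fin 4)) ≠ Pr M σ 1 ({2} : Set (Fin 4))) ∧
    (¬ ∃ σ : Scheduler M, σ.MD ∧
        Pr M σ 0 ({2} : Set (Fin 4)) ≠ Pr M σ 1 ({2} : Set (Fin 4))) := by
  constructor
  · intro σ hσ
    rw [Pr_zero M σ hM, Pr_one M σ hM]
    have h := hσ.1 ((0 : Fin 4), ([] : List (Fin 2 × Fin 4)))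
      ((1 : Fin 4), [((0 : Fin 2), (0 : Fin 4))]) rfl
    rw [h]
  · have hlt : Pr M (memSched M hM) 1 ({2} : Set (Fin 4))
        < Pr M (memSched M hM) 0 ({2} : Set (Fin 4)) := by
      rw [memSched_pr0 M hM, memSched_pr1 M hM]; norm_num
    refine ⟨⟨memSched M hM, hlt⟩, ?_, ⟨memSched M hM, hlt.ne'⟩, ?_⟩
    · rintro ⟨σ, hσ, hlt'⟩
      have := hσ.1 ((0 : Fin 4), ([] : List (Fin 2 × Fin 4)))
        ((1 : Fin 4), [((0 : Fin 2), (0 : Fin 4))]) rfl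
      rw [Pr_zero M σ hM, Pr_one M σ hM, this] at hlt'
      exact lt_irrefl _ hlt'
    · rintro ⟨σ, hσ, hne'⟩
      apply hne'
      rw [Pr_zero M σ hM, Pr_one M σ hM,
        hσ.1 ((0 : Fin 4), ([] : List (Fin 2 × Fin 4)))
          ((1 : Fin 4), [((0 : Fin 2), (0 : Fin 4))]) rfl]
end

section
/- Let M be an MDP with states s₁,…,s_m, target sets T₁,…,T_m, and rational coefficients q₁,…,q_{m+1}. Suppose each probability operator has its own scheduler quantifier (n = m). Then for ▷ ∈ {≥, >}: there exist schedulers σ₁,…,σ_m ∈ HR with Σ_{i=1}^m qᵢ · Pr^{σᵢ}_{sᵢ}(◇Tᵢ) ▷ q_{m+1} if and only if there exist memoryless deterministic schedulers σ₁,…,σ_m with the same property; likewise, for every ε ≥ 0, there exist σ₁,…,σ_m ∈ HR with |Σ_{i=1}^m qᵢ · Pr^{σᵢ}_{sᵢ}(◇Tᵢ) − q_{m+1}| > ε if and only if there exist memoryless deterministic such schedulers. That is, MD schedulers suffice when n = m and the comparison is an inequality or disequality. -/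
open scoped BigOperators Classical
open Filter

/-!
Since every probability in the sum has its own scheduler, the sum is maximised (minimised) by
maximising or minimising each `Pr M (σ i) (s i) (T i)` separately according to the sign of
`q i`, and all three comparisons only depend on these two extreme values. So it suffices that
for a single target there are MD schedulers that maximise, resp. minimise, the reachability
probability from all states at once.

The optimal values are the limits of value iteration from the indicator of the target. Acting
greedily with respect to the minimal value already attains it. For the maximal value `V` a greedy
scheduler may idle forever in an end component, so it has to pick greedy actions that also
decrease the distance to `T ∪ {V = 0}`; such actions exist because lowering `V` off this greedy
attractor would produce a smaller pre-fixed point. The difference between `V` and the value of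
such a scheduler is harmonic off `T` and nonpositive on `T ∪ {V = 0}`, hence nonpositive everywhere
by a maximum principle along the decreasing distance.
-/

open Finset Function

namespace Monotone

variable {α : Type*} {F : α → α} {x y : α}

theorem iterate_le_of_map_le [Preorder α] (hF : Monotone F) (hxy : x ≤ y) (hy : F y ≤ y) :
    ∀ n, F^[n] x ≤ y
  | 0 => hxy
  | n + 1 => by
    rw [iterate_succ_apply']
    exact (hF (hF.iterate_le_of_map_le hxy hy n)).trans hy

variable [ConditionallyCompleteLattice α]

theorem iSup_iterate_le (hF : Monotone F) (hxy : x ≤ y) (hy : F y ≤ y) : ⨆ n, F^[n] x ≤ y :=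
  ciSup_le (hF.iterate_le_of_map_le hxy hy)

theorem isFixedPt_iSup_iterate [TopologicalSpace α] [SupConvergenceClass α] [T2Space α]
    (hF : Monotone F) (hc : Continuous F) (hx : x ≤ F x) (hxy : x ≤ y) (hy : F y ≤ y) :
    IsFixedPt F (⨆ n, F^[n] x) := by
  have hlim := tendsto_atTop_ciSup (hF.monotone_iterate_of_le_map hx)
    ⟨y, Set.forall_mem_range.2 (hF.iterate_le_of_map_le hxy hy)⟩
  refine tendsto_nhds_unique ((hc.tendsto _).comp hlim) ?_
  simpa only [comp_def, ← iterate_succ_apply' F] using hlim.comp (Filter.tendsto_add_atTop_nat 1)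

end Monotone

theorem exists_pos_forall_le_of_pos {ι : Type*} [Finite ι] (f : ι → ℝ) :
    ∃ ε > 0, ∀ i, 0 < f i → ε ≤ f i := by
  rcases isEmpty_or_nonempty ι with hι | hι
  · exact ⟨1, one_pos, fun i => isEmptyElim i⟩
  · obtain ⟨j, hj⟩ := Finite.exists_min fun i => if 0 < f i then f i else 1
    refine ⟨_, ?_, fun i hi => (hj i).trans_eq (if_pos hi)⟩
    split_ifs with h
    exacts [h, one_pos]

structure IsReachOperator {S : Type*} (T : Set S) (F : (S → ℝ) → S → ℝ) : Prop where
  mono : Monotone F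
  cont : Continuous F
  map_zero : F 0 = T.indicator 1
  map_one_le : F 1 ≤ 1

namespace IsReachOperator

variable {S : Type*} {T : Set S} {F : (S → ℝ) → S → ℝ}

theorem indicator_nonneg : 0 ≤ T.indicator (1 : S → ℝ) :=
  fun _ => Set.indicator_nonneg (fun _ _ => zero_le_one) _

theorem indicator_le_one : T.indicator (1 : S → ℝ) ≤ 1 :=
  fun _ => Set.indicator_le_self' (fun _ _ => zero_le_one) _

variable (hF : IsReachOperator T F)
include hF

theorem indicator_le_map : T.indicator 1 ≤ F (T.indicator 1) :=
  calc T.indicator 1 = F 0 := hF.map_zero.symm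
    _ ≤ F (T.indicator 1) := hF.mono indicator_nonneg

theorem iSup_le {W : S → ℝ} (hT : T.indicator 1 ≤ W) (hW : F W ≤ W) :
    ⨆ n, F^[n] (T.indicator 1) ≤ W :=
  hF.mono.iSup_iterate_le hT hW

theorem isFixedPt : IsFixedPt F (⨆ n, F^[n] (T.indicator 1)) :=
  hF.mono.isFixedPt_iSup_iterate hF.cont hF.indicator_le_map indicator_le_one hF.map_one_le

theorem iterate_le_iSup (n : ℕ) : F^[n] (T.indicator 1) ≤ ⨆ n, F^[n] (T.indicator 1) :=
  le_ciSup ⟨1, Set.forall_mem_range.2 (hF.mono.iterate_le_of_map_le indicator_le_one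
    hF.map_one_le)⟩ n

theorem indicator_le_iSup : T.indicator 1 ≤ ⨆ n, F^[n] (T.indicator 1) :=
  hF.iterate_le_iSup 0

theorem iSup_nonneg : 0 ≤ ⨆ n, F^[n] (T.indicator 1) :=
  indicator_nonneg.trans hF.indicator_le_iSup

theorem iSup_apply_of_mem {s : S} (hs : s ∈ T) : (⨆ n, F^[n] (T.indicator 1)) s = 1 :=
  le_antisymm (hF.iSup_le indicator_le_one hF.map_one_le s)
    (by simpa [hs] using hF.indicator_le_iSup s)

end IsReachOperator

namespace MDP

variable {S A : Type*} [Fintype S] [Fintype A] (M : MDP S A)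

def expect (s : S) (a : A) (V : S → ℝ) : ℝ := ∑ t, M.P s a t * V t

noncomputable def enabledActions (s : S) : Finset A := {a | M.enabled s a}

theorem mem_enabledActions {s : S} {a : A} : a ∈ M.enabledActions s ↔ M.enabled s a := by
  simp [enabledActions]

theorem enabledActions_nonempty (s : S) : (M.enabledActions s).Nonempty :=
  (M.exists_enabled s).imp fun _ => M.mem_enabledActions.2

variable {M} {s : S} {a : A} {V W : S → ℝ}

theorem expect_mono (h : V ≤ W) : M.expect s a V ≤ M.expect s a W :=
  sum_le_sum fun t _ => mul_le_mul_of_nonneg_left (h t) (M.nonneg s a t)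

theorem expect_nonneg (h : 0 ≤ V) : 0 ≤ M.expect s a V :=
  sum_nonneg fun t _ => mul_nonneg (M.nonneg s a t) (h t)

theorem expect_const (ha : M.enabled s a) (k : ℝ) : M.expect s a (fun _ => k) = k := by
  rw [expect, ← sum_mul, ha, one_mul]

theorem expect_one_le : M.expect s a 1 ≤ 1 := by
  simp only [expect, Pi.one_apply, mul_one]
  rcases M.sum_cases s a with h | h <;> simp [h]

theorem expect_sub : M.expect s a (V - W) = M.expect s a V - M.expect s a W := by
  simp only [expect, Pi.sub_apply, mul_sub, sum_sub_distrib]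

theorem expect_congr (h : ∀ u, 0 < M.P s a u → V u = W u) : M.expect s a V = M.expect s a W :=
  sum_congr rfl fun u _ => by
    rcases (M.nonneg s a u).lt_or_eq with hu | hu
    · rw [h u hu]
    · simp [← hu]

theorem continuous_expect : Continuous (M.expect s a) := by
  unfold expect; fun_prop

theorem apply_eq_of_expect_eq (ha : M.enabled s a) {m : ℝ} (hV : ∀ t, V t ≤ m)
    (h : M.expect s a V = m) {u : S} (hu : 0 < M.P s a u) : V u = m := by
  by_contra hne
  have hlt : M.expect s a V < M.expect s a (fun _ => m) :=
    sum_lt_sum (fun t _ => mul_le_mul_of_nonneg_left (hV t) (M.nonneg s a t))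
      ⟨u, mem_univ u, mul_lt_mul_of_pos_left ((hV u).lt_of_ne hne) hu⟩
  rw [expect_const ha, h] at hlt
  exact hlt.false

variable (M) (T : Set S)

noncomputable def bellmanMax (V : S → ℝ) (s : S) : ℝ :=
  if s ∈ T then 1 else (M.enabledActions s).sup' (M.enabledActions_nonempty s) (M.expect s · V)

noncomputable def bellmanMin (V : S → ℝ) (s : S) : ℝ :=
  if s ∈ T then 1 else (M.enabledActions s).inf' (M.enabledActions_nonempty s) (M.expect s · V)

noncomputable def bellmanOf (c : S → A) (V : S → ℝ) (s : S) : ℝ :=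
  if s ∈ T then 1 else M.expect s (c s) V

theorem isReachOperator_bellmanMax : IsReachOperator T (M.bellmanMax T) where
  mono _ _ h s := by
    unfold bellmanMax; split_ifs
    exacts [le_rfl, sup'_mono_fun fun a _ => expect_mono h]
  cont := continuous_pi fun s => by
    unfold bellmanMax; split_ifs
    exacts [continuous_const, Continuous.finset_sup'_apply _ fun a _ => continuous_expect]
  map_zero := funext fun s => by
    simp [bellmanMax, expect, Set.indicator_apply]
  map_one_le s := by
    unfold bellmanMax; split_ifs
    exacts [le_rfl, sup'_le _ _ fun a _ => expect_one_le]

theorem isReachOperator_bellmanMin : IsReachOperator T (M.bellmanMin T) where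
  mono _ _ h s := by
    unfold bellmanMin; split_ifs
    exacts [le_rfl, inf'_mono_fun fun a _ => expect_mono h]
  cont := continuous_pi fun s => by
    unfold bellmanMin; split_ifs
    exacts [continuous_const, Continuous.finset_inf'_apply _ fun a _ => continuous_expect]
  map_zero := funext fun s => by
    simp [bellmanMin, expect, Set.indicator_apply]
  map_one_le s := by
    unfold bellmanMin; split_ifs
    · exact le_rfl
    · obtain ⟨a, ha⟩ := M.enabledActions_nonempty s
      exact (inf'_le _ ha).trans expect_one_le

theorem isReachOperator_bellmanOf (c : S → A) : IsReachOperator T (M.bellmanOf T c) where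
  mono _ _ h s := by
    unfold bellmanOf; split_ifs
    exacts [le_rfl, expect_mono h]
  cont := continuous_pi fun s => by
    unfold bellmanOf; split_ifs
    exacts [continuous_const, continuous_expect]
  map_zero := funext fun s => by
    simp [bellmanOf, expect, Set.indicator_apply]
  map_one_le s := by
    unfold bellmanOf; split_ifs
    exacts [le_rfl, expect_one_le]

end MDP

namespace Scheduler

variable {S A : Type*} [Fintype S] [Fintype A] {M : MDP S A}

theorem sum_choice_mul_le_sup' (σ : Scheduler M) (π : Hist S A) (f : A → ℝ) :
    ∑ a, σ.choice π a * f a ≤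
      (M.enabledActions π.last).sup' (M.enabledActions_nonempty _) f := by
  calc ∑ a, σ.choice π a * f a
      ≤ ∑ a, σ.choice π a * (M.enabledActions π.last).sup' (M.enabledActions_nonempty _) f :=
        sum_le_sum fun a _ => by
          by_cases ha : M.enabled π.last a
          · exact mul_le_mul_of_nonneg_left (le_sup' f (M.mem_enabledActions.2 ha)) (σ.nonneg π a)
          · simp [σ.supp π a ha]
    _ = _ := by rw [← sum_mul, σ.sum_one, one_mul]

theorem inf'_le_sum_choice_mul (σ : Scheduler M) (π : Hist S A) (f : A → ℝ) :
    (M.enabledActions π.last).inf' (M.enabledActions_nonempty _) f ≤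
      ∑ a, σ.choice π a * f a := by
  calc (M.enabledActions π.last).inf' (M.enabledActions_nonempty _) f
      = ∑ a, σ.choice π a * (M.enabledActions π.last).inf' (M.enabledActions_nonempty _) f := by
        rw [← sum_mul, σ.sum_one, one_mul]
    _ ≤ ∑ a, σ.choice π a * f a :=
        sum_le_sum fun a _ => by
          by_cases ha : M.enabled π.last a
          · exact mul_le_mul_of_nonneg_left (inf'_le f (M.mem_enabledActions.2 ha)) (σ.nonneg π a)
          · simp [σ.supp π a ha]

variable (M) in
noncomputable def ofFun (c : S → A) (hc : ∀ s, M.enabled s (c s)) : Scheduler M where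
  choice π a := if a = c π.last then 1 else 0
  nonneg π a := by positivity
  sum_one π := by simp
  supp π a h := if_neg fun he : a = c π.last => h (he ▸ hc _)

theorem ofFun_choice (c : S → A) (hc : ∀ s, M.enabled s (c s)) (π : Hist S A) (a : A) :
    (ofFun M c hc).choice π a = if a = c π.last then 1 else 0 :=
  rfl

theorem ofFun_MD (c : S → A) (hc : ∀ s, M.enabled s (c s)) : (ofFun M c hc).MD :=
  ⟨fun π π' h => by simp only [ofFun, h], fun π a => by
    by_cases h : a = c π.last <;> simp [ofFun, h]⟩

end Scheduler

theorem Hist.last_append {S A : Type*} (π : Hist S A) (a : A) (t : S) :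
    Hist.last (π.1, π.2 ++ [(a, t)]) = t := by
  simp [Hist.last, List.getLast?_append]

section Reach

variable {S A : Type*} [Fintype S] [Fintype A] {M : MDP S A} {T : Set S}

theorem reachN_zero (σ : Scheduler M) (π : Hist S A) :
    reachN M σ T 0 π = T.indicator 1 π.last := by
  simp [reachN, Set.indicator_apply]

theorem reachN_succ (σ : Scheduler M) (n : ℕ) (π : Hist S A) :
    reachN M σ T (n + 1) π = if π.last ∈ T then 1 else
      ∑ a, σ.choice π a * M.expect π.last a fun t => reachN M σ T n (π.1, π.2 ++ [(a, t)]) :=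
  rfl

theorem reachN_le_iterate_bellmanMax (σ : Scheduler M) :
    ∀ n π, reachN M σ T n π ≤ (M.bellmanMax T)^[n] (T.indicator 1) π.last
  | 0, π => (reachN_zero σ π).le
  | n + 1, π => by
    rw [reachN_succ, iterate_succ_apply', MDP.bellmanMax]
    split_ifs
    · exact le_rfl
    · refine le_trans (sum_le_sum fun a _ => mul_le_mul_of_nonneg_left (MDP.expect_mono fun t => ?_)
        (σ.nonneg π a)) (σ.sum_choice_mul_le_sup' π _)
      simpa only [Hist.last_append] using reachN_le_iterate_bellmanMax σ n (π.1, π.2 ++ [(a, t)])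

theorem iterate_bellmanMin_le_reachN (σ : Scheduler M) :
    ∀ n π, (M.bellmanMin T)^[n] (T.indicator 1) π.last ≤ reachN M σ T n π
  | 0, π => (reachN_zero σ π).ge
  | n + 1, π => by
    rw [reachN_succ, iterate_succ_apply', MDP.bellmanMin]
    split_ifs
    · exact le_rfl
    · refine le_trans (σ.inf'_le_sum_choice_mul π _) (sum_le_sum fun a _ =>
        mul_le_mul_of_nonneg_left (MDP.expect_mono fun t => ?_) (σ.nonneg π a))
      simpa only [Hist.last_append] using iterate_bellmanMin_le_reachN σ n (π.1, π.2 ++ [(a, t)])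

theorem reachN_ofFun (c : S → A) (hc : ∀ s, M.enabled s (c s)) :
    ∀ n π, reachN M (.ofFun M c hc) T n π = (M.bellmanOf T c)^[n] (T.indicator 1) π.last
  | 0, π => reachN_zero _ π
  | n + 1, π => by
    rw [reachN_succ, iterate_succ_apply', MDP.bellmanOf]
    congr 1
    simp only [Scheduler.ofFun_choice, ite_mul, one_mul, zero_mul, sum_ite_eq', mem_univ, if_true]
    congr 1
    funext t
    rw [reachN_ofFun c hc n, Hist.last_append]

end Reach

namespace MDP

variable {S A : Type*} [Fintype S] [Fintype A] (M : MDP S A) (T : Set S)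

noncomputable def maxReach : S → ℝ := ⨆ n, (M.bellmanMax T)^[n] (T.indicator 1)

noncomputable def minReach : S → ℝ := ⨆ n, (M.bellmanMin T)^[n] (T.indicator 1)

noncomputable def reachOf (c : S → A) : S → ℝ := ⨆ n, (M.bellmanOf T c)^[n] (T.indicator 1)

variable {M T}

theorem reachN_le_maxReach (σ : Scheduler M) (n : ℕ) (π : Hist S A) :
    reachN M σ T n π ≤ M.maxReach T π.last :=
  (reachN_le_iterate_bellmanMax σ n π).trans ((M.isReachOperator_bellmanMax T).iterate_le_iSup n _)

theorem Pr_le_maxReach (σ : Scheduler M) (s : S) : Pr M σ s T ≤ M.maxReach T s :=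
  ciSup_le fun n => reachN_le_maxReach σ n (s, [])

theorem reachN_le_Pr (σ : Scheduler M) (n : ℕ) (s : S) : reachN M σ T n (s, []) ≤ Pr M σ s T :=
  le_ciSup ⟨M.maxReach T s, Set.forall_mem_range.2 fun n => reachN_le_maxReach σ n (s, [])⟩ n

theorem minReach_le_Pr (σ : Scheduler M) (s : S) : M.minReach T s ≤ Pr M σ s T := by
  rw [minReach, iSup_apply]
  exact ciSup_le fun n => (iterate_bellmanMin_le_reachN σ n (s, [])).trans (reachN_le_Pr σ n s)

theorem Pr_ofFun (c : S → A) (hc : ∀ s, M.enabled s (c s)) (s : S) :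
    Pr M (.ofFun M c hc) s T = M.reachOf T c s := by
  simp only [Pr, reachN_ofFun, reachOf, iSup_apply]
  rfl

variable (M T) in
theorem reachOf_nonneg (c : S → A) : 0 ≤ M.reachOf T c :=
  (M.isReachOperator_bellmanOf T c).iSup_nonneg

theorem reachOf_of_mem {c : S → A} {s : S} (hs : s ∈ T) : M.reachOf T c s = 1 :=
  (M.isReachOperator_bellmanOf T c).iSup_apply_of_mem hs

theorem expect_reachOf {c : S → A} {s : S} (hs : s ∉ T) :
    M.expect s (c s) (M.reachOf T c) = M.reachOf T c s := by
  have hfix := congrFun (show M.bellmanOf T c (M.reachOf T c) = M.reachOf T c from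
    (M.isReachOperator_bellmanOf T c).isFixedPt) s
  rwa [bellmanOf, if_neg hs] at hfix

variable (M T)

theorem exists_MD_minimizing_Pr :
    ∃ σ : Scheduler M, σ.MD ∧ ∀ τ s, Pr M σ s T ≤ Pr M τ s T := by
  have hmin := M.isReachOperator_bellmanMin T
  choose c hc hc_inf using fun s =>
    exists_mem_eq_inf' (M.enabledActions_nonempty s) (M.expect s · (M.minReach T))
  have hc_en : ∀ s, M.enabled s (c s) := fun s => M.mem_enabledActions.1 (hc s)
  have hfix : M.bellmanOf T c (M.minReach T) = M.minReach T :=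
    calc M.bellmanOf T c (M.minReach T) = M.bellmanMin T (M.minReach T) :=
          funext fun t => by simp only [bellmanOf, bellmanMin, hc_inf]
      _ = M.minReach T := hmin.isFixedPt
  refine ⟨.ofFun M c hc_en, Scheduler.ofFun_MD c hc_en, fun τ s => ?_⟩
  rw [Pr_ofFun]
  exact ((M.isReachOperator_bellmanOf T c).iSup_le hmin.indicator_le_iSup hfix.le s).trans
    (minReach_le_Pr τ s)

def attractor (Z : Set S) (good : S → A → Prop) : ℕ → Set S
  | 0 => Z
  | k + 1 => attractor Z good k ∪
      {s | ∃ a, good s a ∧ ∃ u, 0 < M.P s a u ∧ u ∈ attractor Z good k}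

def IsGreedy (V : S → ℝ) (s : S) (a : A) : Prop := M.enabled s a ∧ M.expect s a V = V s

variable {M} {Z : Set S} {good : S → A → Prop}

noncomputable def attractorRank (h : ∀ s, ∃ k, s ∈ M.attractor Z good k) (s : S) : ℕ :=
  Nat.find (h s)

theorem exists_attractorRank_lt (h : ∀ s, ∃ k, s ∈ M.attractor Z good k) {s : S} (hs : s ∉ Z) :
    ∃ a, good s a ∧ ∃ u, 0 < M.P s a u ∧ attractorRank h u < attractorRank h s := by
  have hspec : s ∈ M.attractor Z good (attractorRank h s) := Nat.find_spec (h s)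
  cases hk : attractorRank h s with
  | zero => rw [hk] at hspec; exact absurd hspec hs
  | succ k =>
    rw [hk] at hspec
    rcases hspec with hs' | ⟨a, ha, u, hu, hu'⟩
    · have : attractorRank h s ≤ k := Nat.find_min' (h s) hs'
      omega
    · exact ⟨a, ha, u, hu, (Nat.find_min' (h u) hu').trans_lt k.lt_succ_self⟩

/-- A maximum principle: a state outside `Z` where `g` is maximal passes the maximum on to a
successor of smaller rank. -/
theorem nonpos_of_expect_eq_of_rank_lt {c : S → A} (hc : ∀ s, M.enabled s (c s)) (rank : S → ℕ)
    {g : S → ℝ} (hZ : ∀ s ∈ Z, g s ≤ 0) (hharm : ∀ s ∉ Z, M.expect s (c s) g = g s)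
    (hrank : ∀ s ∉ Z, ∃ u, 0 < M.P s (c s) u ∧ rank u < rank s) (s : S) : g s ≤ 0 := by
  by_contra! hpos
  have : Nonempty S := ⟨s⟩
  obtain ⟨s₀, hmax⟩ := Finite.exists_max g
  have hm : 0 < g s₀ := hpos.trans_le (hmax s)
  have key : ∀ n t, rank t = n → g t ≠ g s₀ := by
    intro n
    induction n using Nat.strong_induction_on with
    | _ n ih =>
      rintro t rfl ht
      have htZ : t ∉ Z := fun h => (hZ t h).not_gt (ht ▸ hm)
      obtain ⟨u, hu, hlt⟩ := hrank t htZ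
      exact ih _ hlt u rfl (apply_eq_of_expect_eq (hc t) hmax ((hharm t htZ).trans ht) hu)
  exact key _ s₀ rfl rfl

variable {T}

theorem isFixedPt_maxReach : M.bellmanMax T (M.maxReach T) = M.maxReach T :=
  (M.isReachOperator_bellmanMax T).isFixedPt

variable (M T) in
theorem maxReach_nonneg : 0 ≤ M.maxReach T :=
  (M.isReachOperator_bellmanMax T).iSup_nonneg

theorem maxReach_of_mem {s : S} (hs : s ∈ T) : M.maxReach T s = 1 :=
  (M.isReachOperator_bellmanMax T).iSup_apply_of_mem hs

theorem maxReach_le {W : S → ℝ} (hT : T.indicator 1 ≤ W) (hW : M.bellmanMax T W ≤ W) :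
    M.maxReach T ≤ W :=
  (M.isReachOperator_bellmanMax T).iSup_le hT hW

theorem expect_maxReach_le {s : S} {a : A} (ha : M.enabled s a) (hs : s ∉ T) :
    M.expect s a (M.maxReach T) ≤ M.maxReach T s := by
  have hfix := congrFun (isFixedPt_maxReach (M := M) (T := T)) s
  rw [bellmanMax, if_neg hs] at hfix
  exact hfix ▸ le_sup' (M.expect s · (M.maxReach T)) (M.mem_enabledActions.2 ha)

theorem bellmanMax_sub_indicator_le {C : Set S} {ε : ℝ} (hε : 0 ≤ ε) (hCT : ∀ s ∈ C, s ∉ T)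
    (hclosed : ∀ s ∈ C, ∀ a, M.IsGreedy (M.maxReach T) s a → ∀ u, 0 < M.P s a u → u ∈ C)
    (hgap : ∀ s ∈ C, ∀ a, M.enabled s a → ¬ M.IsGreedy (M.maxReach T) s a →
      ε ≤ M.maxReach T s - M.expect s a (M.maxReach T)) :
    M.bellmanMax T (M.maxReach T - C.indicator fun _ => ε) ≤
      M.maxReach T - C.indicator fun _ => ε := by
  intro s
  by_cases hs : s ∈ T
  · simp [bellmanMax, hs, maxReach_of_mem hs, Set.indicator_of_notMem fun h => hCT s h hs]
  rw [bellmanMax, if_neg hs]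
  refine sup'_le _ _ fun a ha => ?_
  have ha := M.mem_enabledActions.1 ha
  have hI : 0 ≤ M.expect s a (C.indicator fun _ => ε) :=
    expect_nonneg fun t => Set.indicator_nonneg (fun _ _ => hε) t
  rw [expect_sub, Pi.sub_apply]
  by_cases hsC : s ∈ C
  · rw [Set.indicator_of_mem hsC]
    by_cases hg : M.IsGreedy (M.maxReach T) s a
    · rw [hg.2, expect_congr (W := fun _ => ε)
        (fun u hu => Set.indicator_of_mem (hclosed s hsC a hg u hu) _), expect_const ha]
    · linarith [hgap s hsC a ha hg]
  · rw [Set.indicator_of_notMem hsC]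
    linarith [expect_maxReach_le ha hs]

variable (M T)

/-- Otherwise lowering `maxReach` by a small `ε` outside the attractor would give a smaller
pre-fixed point of `bellmanMax`. -/
theorem maxReach_mem_attractor (s : S) :
    ∃ k, s ∈ M.attractor (T ∪ {t | M.maxReach T t = 0}) (M.IsGreedy (M.maxReach T)) k := by
  set V := M.maxReach T
  set C : Set S := {t | ∀ k, t ∉ M.attractor (T ∪ {t | V t = 0}) (M.IsGreedy V) k}
  by_contra! hs
  have hsC : s ∈ C := hs
  have hCZ : ∀ t ∈ C, t ∉ T ∧ 0 < V t := fun t ht => by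
    have : t ∉ T ∧ V t ≠ 0 := by simpa [attractor] using ht 0
    exact ⟨this.1, (maxReach_nonneg M T t).lt_of_ne' this.2⟩
  have hclosed : ∀ t ∈ C, ∀ a, M.IsGreedy V t a → ∀ u, 0 < M.P t a u → u ∈ C :=
    fun t ht a ha u hu k hk => ht (k + 1) (Or.inr ⟨a, ha, u, hu, hk⟩)
  obtain ⟨ε₁, hε₁, hV⟩ := exists_pos_forall_le_of_pos V
  obtain ⟨ε₂, hε₂, hgap⟩ := exists_pos_forall_le_of_pos fun p : S × A => V p.1 - M.expect p.1 p.2 V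
  set ε := min ε₁ ε₂
  have hεgap : ∀ t ∈ C, ∀ a, M.enabled t a → ¬ M.IsGreedy V t a → ε ≤ V t - M.expect t a V := by
    intro t ht a ha hg
    have hlt := (expect_maxReach_le ha (hCZ t ht).1).lt_of_ne fun h => hg ⟨ha, h⟩
    exact (min_le_right _ _).trans (hgap (t, a) (sub_pos.2 hlt))
  have hind : T.indicator 1 ≤ V - C.indicator fun _ => ε := fun t => by
    by_cases htC : t ∈ C
    · simp only [Pi.sub_apply, Set.indicator_of_mem htC, Set.indicator_of_notMem (hCZ t htC).1]
      linarith [min_le_left ε₁ ε₂, hV t (hCZ t htC).2]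
    · by_cases htT : t ∈ T
      · simp [Set.indicator_of_notMem htC, htT, maxReach_of_mem htT, V]
      · simpa [Set.indicator_of_notMem htC, htT] using maxReach_nonneg M T t
  have hle := maxReach_le hind
    (bellmanMax_sub_indicator_le (by positivity) (fun t ht => (hCZ t ht).1) hclosed hεgap) s
  simp only [Pi.sub_apply, Set.indicator_of_mem hsC] at hle
  linarith [lt_min hε₁ hε₂]

theorem exists_greedy_choice_rank_lt : ∃ c : S → A, (∀ s, M.enabled s (c s)) ∧
    (∀ s ∉ T, M.expect s (c s) (M.maxReach T) = M.maxReach T s) ∧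
    ∀ s ∉ T ∪ {t | M.maxReach T t = 0}, ∃ u, 0 < M.P s (c s) u ∧
      attractorRank (M.maxReach_mem_attractor T) u < attractorRank (M.maxReach_mem_attractor T) s := by
  have hchoice : ∀ s, ∃ a, M.enabled s a ∧
      (s ∉ T → M.expect s a (M.maxReach T) = M.maxReach T s) ∧
      (s ∉ T ∪ {t | M.maxReach T t = 0} → ∃ u, 0 < M.P s a u ∧
        attractorRank (M.maxReach_mem_attractor T) u <
          attractorRank (M.maxReach_mem_attractor T) s) := by
    intro s
    by_cases hs : s ∈ T ∪ {t | M.maxReach T t = 0}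
    · obtain ⟨a, ha⟩ := M.exists_enabled s
      refine ⟨a, ha, fun hsT => ?_, fun h => (h hs).elim⟩
      have hV0 : M.maxReach T s = 0 := hs.resolve_left hsT
      exact le_antisymm (expect_maxReach_le ha hsT) (hV0 ▸ expect_nonneg (maxReach_nonneg M T))
    · obtain ⟨a, ⟨ha, hopt⟩, hrank⟩ := exists_attractorRank_lt (M.maxReach_mem_attractor T) hs
      exact ⟨a, ha, fun _ => hopt, fun _ => hrank⟩
  choose c hc hopt hrank using hchoice
  exact ⟨c, hc, hopt, hrank⟩

theorem exists_MD_maximizing_Pr :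
    ∃ σ : Scheduler M, σ.MD ∧ ∀ τ s, Pr M τ s T ≤ Pr M σ s T := by
  obtain ⟨c, hc, hopt, hrank⟩ := M.exists_greedy_choice_rank_lt T
  refine ⟨.ofFun M c hc, Scheduler.ofFun_MD c hc, fun τ s => (Pr_le_maxReach τ s).trans ?_⟩
  suffices ∀ t, (M.maxReach T - M.reachOf T c) t ≤ 0 by
    rw [Pr_ofFun]; exact sub_nonpos.1 (this s)
  refine nonpos_of_expect_eq_of_rank_lt hc _ (fun t ht => ?_) (fun t ht => ?_) hrank
  · rcases ht with ht | ht
    · simp [maxReach_of_mem ht, reachOf_of_mem ht]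
    · simpa [show M.maxReach T t = 0 from ht] using reachOf_nonneg M T c t
  · have htT : t ∉ T := fun h => ht (Or.inl h)
    rw [expect_sub, hopt t htT, expect_reachOf htT]
    rfl

theorem exists_MD_mul_Pr_le (w : ℝ) (s : S) :
    ∃ σ : Scheduler M, σ.MD ∧ ∀ τ, w * Pr M τ s T ≤ w * Pr M σ s T := by
  rcases le_total 0 w with hw | hw
  · obtain ⟨σ, hσ, hmax⟩ := M.exists_MD_maximizing_Pr T
    exact ⟨σ, hσ, fun τ => mul_le_mul_of_nonneg_left (hmax τ s) hw⟩
  · obtain ⟨σ, hσ, hmin⟩ := M.exists_MD_minimizing_Pr T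
    exact ⟨σ, hσ, fun τ => mul_le_mul_of_nonpos_left (hmin τ s) hw⟩

omit T in
theorem exists_MD_sum_mul_Pr_le {ι : Type*} [Fintype ι] (w : ι → ℝ) (s : ι → S) (T : ι → Set S) :
    ∃ σ : ι → Scheduler M, (∀ i, (σ i).MD) ∧ ∀ τ : ι → Scheduler M,
      ∑ i, w i * Pr M (τ i) (s i) (T i) ≤ ∑ i, w i * Pr M (σ i) (s i) (T i) := by
  choose σ hσ hle using fun i => M.exists_MD_mul_Pr_le (T i) (w i) (s i)
  exact ⟨σ, hσ, fun τ => sum_le_sum fun i _ => hle i (τ i)⟩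

end MDP

theorem MD_suffice_independent_quantifiers_general
    {S A : Type*} [Fintype S] [Fintype A]
    (M : MDP S A) {m : ℕ}
    (q : Fin m → ℚ) (qf : ℚ) (s : Fin m → S) (T : Fin m → Set S) :
    ((∃ σ : Fin m → Scheduler M,
        (∑ i, (q i : ℝ) * Pr M (σ i) (s i) (T i)) ≥ (qf : ℝ)) ↔
      (∃ σ : Fin m → Scheduler M, (∀ i, (σ i).MD) ∧
        (∑ i, (q i : ℝ) * Pr M (σ i) (s i) (T i)) ≥ (qf : ℝ))) ∧
    ((∃ σ : Fin m → Scheduler M,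
        (∑ i, (q i : ℝ) * Pr M (σ i) (s i) (T i)) > (qf : ℝ)) ↔
      (∃ σ : Fin m → Scheduler M, (∀ i, (σ i).MD) ∧
        (∑ i, (q i : ℝ) * Pr M (σ i) (s i) (T i)) > (qf : ℝ))) ∧
    (∀ ε : ℝ, 0 ≤ ε →
      ((∃ σ : Fin m → Scheduler M,
          |(∑ i, (q i : ℝ) * Pr M (σ i) (s i) (T i)) - (qf : ℝ)| > ε) ↔
        (∃ σ : Fin m → Scheduler M, (∀ i, (σ i).MD) ∧
          |(∑ i, (q i : ℝ) * Pr M (σ i) (s i) (T i)) - (qf : ℝ)| > ε))) := by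
  obtain ⟨σmax, hmaxMD, hmax⟩ := M.exists_MD_sum_mul_Pr_le (fun i => (q i : ℝ)) s T
  obtain ⟨σmin, hminMD, hmin⟩ := M.exists_MD_sum_mul_Pr_le (fun i => -(q i : ℝ)) s T
  simp only [neg_mul, sum_neg_distrib, neg_le_neg_iff] at hmin
  refine ⟨⟨fun ⟨σ, h⟩ => ⟨σmax, hmaxMD, h.trans (hmax σ)⟩, fun ⟨σ, _, h⟩ => ⟨σ, h⟩⟩,
    ⟨fun ⟨σ, h⟩ => ⟨σmax, hmaxMD, h.trans_le (hmax σ)⟩, fun ⟨σ, _, h⟩ => ⟨σ, h⟩⟩,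
    fun ε _ => ⟨fun ⟨σ, h⟩ => ?_, fun ⟨σ, _, h⟩ => ⟨σ, h⟩⟩⟩
  rcases lt_abs.1 h with h | h
  · exact ⟨σmax, hmaxMD, lt_abs.2 (Or.inl (by linarith [hmax σ]))⟩
  · exact ⟨σmin, hminMD, lt_abs.2 (Or.inr (by linarith [hmin σ]))⟩

/-- When each probability operator has its own scheduler quantifier
(`n = m`), MD schedulers suffice for inequalities (`≥`, `>`) and for disequalities
(`|·| > ε`). -/
theorem MD_suffice_independent_quantifiers
    {S A : Type*} [Fintype S] [Fintype A] [Nonempty S] [Nonempty A]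
    (M : MDP S A) {m : ℕ} (hm : 1 ≤ m)
    (q : Fin m → ℚ) (qf : ℚ) (s : Fin m → S) (T : Fin m → Set S) :
    ((∃ σ : Fin m → Scheduler M,
        (∑ i, (q i : ℝ) * Pr M (σ i) (s i) (T i)) ≥ (qf : ℝ)) ↔
      (∃ σ : Fin m → Scheduler M, (∀ i, (σ i).MD) ∧
        (∑ i, (q i : ℝ) * Pr M (σ i) (s i) (T i)) ≥ (qf : ℝ))) ∧
    ((∃ σ : Fin m → Scheduler M,
        (∑ i, (q i : ℝ) * Pr M (σ i) (s i) (T i)) > (qf : ℝ)) ↔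
      (∃ σ : Fin m → Scheduler M, (∀ i, (σ i).MD) ∧
        (∑ i, (q i : ℝ) * Pr M (σ i) (s i) (T i)) > (qf : ℝ))) ∧
    (∀ ε : ℝ, 0 ≤ ε →
      ((∃ σ : Fin m → Scheduler M,
          |(∑ i, (q i : ℝ) * Pr M (σ i) (s i) (T i)) - (qf : ℝ)| > ε) ↔
        (∃ σ : Fin m → Scheduler M, (∀ i, (σ i).MD) ∧
          |(∑ i, (q i : ℝ) * Pr M (σ i) (s i) (T i)) - (qf : ℝ)| > ε))) :=
  MD_suffice_independent_quantifiers_general M q qf s T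
end
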